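/- arXiv:2401.01121 — 3 statements merged into one kernel-verified Lean document; each statement's English description precedes it below -/
import Mathlib

section
/- Let ν be a positive (locally finite) measure on ℝ which is a tempered distribution. Then there exist constants T < ∞ and C < ∞ such that ν((−r, r)) ≤ C r^T for all r ≥ 1; that is, ν((−r,r)) = O(r^T) as r → ∞. -/
/-!
Continuity of `φ ↦ ∫ φ dν` on `𝓢(ℝ, ℝ)` bounds `|∫ φ dν|` by finitely many of the seminorms
`sup_x |x|^k |φ⁽ⁿ⁾(x)|`. Test this against `φ_r(x) = ψ(x / r)`, where the bump `ψ` is `1` on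
`[-1, 1]` and vanishes outside `[-2, 2]`: `φ_r ≥ 1` on `(-r, r)`, rescaling by `r ≥ 1` only shrinks
the derivatives of `ψ`, and `φ_r` vanishes outside `[-2r, 2r]`, so every seminorm of `φ_r` is
`O(r^k)`. Hence `ν((-r, r)) ≤ ∫ φ_r dν = O(r^K)`.
-/

open MeasureTheory SchwartzMap

noncomputable section

open Metric
open scoped ContDiff

section

variable {E : Type*} [NormedAddCommGroup E] [NormedSpace ℝ E]

theorem tsupport_comp_inv_smul_subset_closedBall {F : Type*} [Zero F] {ψ : E → F} {R r : ℝ}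
    (hsupp : tsupport ψ ⊆ closedBall 0 R) (hr : 0 < r) :
    tsupport (fun y ↦ ψ (r⁻¹ • y)) ⊆ closedBall 0 (R * r) := by
  intro x hx
  have hx' := hsupp (tsupport_comp_subset_preimage ψ (continuous_const_smul r⁻¹) hx)
  rw [mem_closedBall_zero_iff, norm_smul, Real.norm_eq_abs, abs_inv,
    abs_of_pos hr, inv_mul_le_iff₀ hr, mul_comm] at hx'
  exact mem_closedBall_zero_iff.mpr hx'

variable {F : Type*} [NormedAddCommGroup F] [NormedSpace ℝ F]

theorem norm_iteratedFDeriv_comp_inv_smul_le {ψ : E → F} {n : ℕ} (hψ : ContDiff ℝ n ψ)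
    {r : ℝ} (hr : 1 ≤ r) (x : E) :
    ‖iteratedFDeriv ℝ n (fun y ↦ ψ (r⁻¹ • y)) x‖ ≤ ‖iteratedFDeriv ℝ n ψ (r⁻¹ • x)‖ := by
  rw [iteratedFDeriv_comp_const_smul r⁻¹ hψ, norm_smul, norm_pow, Real.norm_eq_abs,
    abs_inv, abs_of_pos (zero_lt_one.trans_le hr)]
  exact mul_le_of_le_one_left (norm_nonneg _)
    (pow_le_one₀ (by positivity) (inv_le_one_of_one_le₀ hr))

namespace SchwartzMap

theorem seminorm_le_of_tsupport_subset_closedBall (𝕜 : Type*) [NormedField 𝕜]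
    [NormedSpace 𝕜 F] [SMulCommClass ℝ 𝕜 F] {k n : ℕ} (f : 𝓢(E, F)) {R D : ℝ} (hR : 0 ≤ R)
    (hsupp : tsupport f ⊆ closedBall 0 R) (hD : ∀ x, ‖iteratedFDeriv ℝ n f x‖ ≤ D) :
    SchwartzMap.seminorm 𝕜 k n f ≤ R ^ k * D := by
  have hD0 : 0 ≤ D := (norm_nonneg _).trans (hD 0)
  refine seminorm_le_bound 𝕜 k n f (by positivity) fun x ↦ ?_
  by_cases hx : x ∈ closedBall (0 : E) R
  · exact mul_le_mul (pow_le_pow_left₀ (norm_nonneg x) (mem_closedBall_zero_iff.mp hx) k) (hD x)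
      (norm_nonneg _) (by positivity)
  · have hx' : x ∉ tsupport (iteratedFDeriv ℝ n f) :=
      fun h ↦ hx (hsupp (tsupport_iteratedFDeriv_subset n h))
    rw [image_eq_zero_of_notMem_tsupport hx', norm_zero, mul_zero]
    positivity

theorem seminorm_comp_inv_smul_le (𝕜 : Type*) [NormedField 𝕜] [NormedSpace 𝕜 F]
    [SMulCommClass ℝ 𝕜 F] {k n : ℕ} {ψ : E → F} (hψ : ContDiff ℝ n ψ) {R D r : ℝ} (hR : 0 ≤ R)
    (hsupp : tsupport ψ ⊆ closedBall 0 R) (hD : ∀ x, ‖iteratedFDeriv ℝ n ψ x‖ ≤ D) (hr : 1 ≤ r)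
    (φ : 𝓢(E, F)) (hφ : ⇑φ = fun x ↦ ψ (r⁻¹ • x)) :
    SchwartzMap.seminorm 𝕜 k n φ ≤ (R * r) ^ k * D := by
  have hr0 : 0 < r := zero_lt_one.trans_le hr
  refine seminorm_le_of_tsupport_subset_closedBall 𝕜 φ (by positivity) ?_ fun x ↦ ?_
  · rw [hφ]
    exact tsupport_comp_inv_smul_subset_closedBall hsupp hr0
  · rw [hφ]
    exact (norm_iteratedFDeriv_comp_inv_smul_le hψ hr x).trans (hD _)

theorem exists_norm_apply_le_pow_of_comp_inv_smul {G : Type*} [SeminormedAddCommGroup G]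
    [NormedSpace ℝ G] (S : 𝓢(E, F) →L[ℝ] G) {ψ : E → F} (hψ : ContDiff ℝ ∞ ψ)
    (hψc : HasCompactSupport ψ) :
    ∃ (K : ℕ) (C : ℝ), ∀ r, 1 ≤ r → ∀ φ : 𝓢(E, F), (⇑φ = fun x ↦ ψ (r⁻¹ • x)) →
      ‖S φ‖ ≤ C * r ^ K := by
  obtain ⟨s, C₀, -, hC₀⟩ := Seminorm.bound_of_continuous (schwartz_withSeminorms ℝ E F)
    ((normSeminorm ℝ G).comp S.toLinearMap) S.continuous.norm
  obtain ⟨R₀, hR₀⟩ := hψc.isCompact.isBounded.subset_closedBall 0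
  -- `R ≥ 1` makes `(R * r) ^ k` monotone in `k`.
  set R := max R₀ 1
  have hR : 1 ≤ R := le_max_right _ _
  have hsupp : tsupport ψ ⊆ closedBall 0 R :=
    hR₀.trans (closedBall_subset_closedBall (le_max_left _ _))
  choose D hD using fun n : ℕ ↦ ((hψ.continuous_iteratedFDeriv (mod_cast le_top)).norm
    |>.bounded_above_of_compact_support (hψc.iteratedFDeriv n).norm)
  set K := s.sup Prod.fst
  refine ⟨K, C₀ * (R ^ K * ∑ p ∈ s, D p.2), fun r hr φ hφ ↦ ?_⟩
  have hD0 : ∀ n, 0 ≤ D n := fun n ↦ (norm_nonneg _).trans (hD n 0)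
  have hsem : ∀ p ∈ s, schwartzSeminormFamily ℝ E F p φ ≤ (R * r) ^ K * ∑ q ∈ s, D q.2 := by
    intro p hp
    calc SchwartzMap.seminorm ℝ p.1 p.2 φ ≤ (R * r) ^ p.1 * D p.2 :=
          seminorm_comp_inv_smul_le ℝ (hψ.of_le (mod_cast le_top)) (by positivity) hsupp
            (fun x ↦ by simpa only [norm_norm] using hD p.2 x) hr φ hφ
      _ ≤ (R * r) ^ K * ∑ q ∈ s, D q.2 := by
          have hsum : D p.2 ≤ ∑ q ∈ s, D q.2 :=
            Finset.single_le_sum (f := fun q : ℕ × ℕ ↦ D q.2) (fun q _ ↦ hD0 q.2) hp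
          exact mul_le_mul (pow_le_pow_right₀ (one_le_mul_of_one_le_of_one_le hR hr)
            (Finset.le_sup (f := Prod.fst) hp)) hsum (hD0 _) (by positivity)
  calc ‖S φ‖ ≤ C₀ * (s.sup (schwartzSeminormFamily ℝ E F)) φ := hC₀ φ
    _ ≤ C₀ * ((R * r) ^ K * ∑ q ∈ s, D q.2) := by
        gcongr
        exact Seminorm.finset_sup_apply_le
          (mul_nonneg (by positivity) (Finset.sum_nonneg fun q _ ↦ hD0 q.2)) hsem
    _ = C₀ * (R ^ K * ∑ p ∈ s, D p.2) * r ^ K := by ring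

end SchwartzMap

end

theorem tempered_measure_has_polynomial_growth_general
    (ν : Measure ℝ)
    (hint : ∀ φ : SchwartzMap ℝ ℝ, Integrable (⇑φ) ν)
    (hcont : ∃ S : SchwartzMap ℝ ℝ →L[ℝ] ℝ, ∀ φ : SchwartzMap ℝ ℝ, S φ = ∫ x, φ x ∂ν) :
    ∃ T C : ℝ, ∀ r : ℝ, 1 ≤ r → ν (Set.Ioo (-r) r) ≤ ENNReal.ofReal (C * r ^ T) := by
  obtain ⟨S, hS⟩ := hcont
  let ψ : ContDiffBump (0 : ℝ) := ⟨1, 2, one_pos, one_lt_two⟩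
  obtain ⟨K, C, hC⟩ := exists_norm_apply_le_pow_of_comp_inv_smul S ψ.contDiff ψ.hasCompactSupport
  refine ⟨K, C, fun r hr ↦ ?_⟩
  have hr0 : 0 < r := zero_lt_one.trans_le hr
  let φ : 𝓢(ℝ, ℝ) := (ψ.hasCompactSupport.comp_smul (inv_ne_zero hr0.ne')).toSchwartzMap
    (ψ.contDiff.comp (contDiff_const_smul r⁻¹))
  have hφ_one : ∀ x ∈ Set.Ioo (-r) r, 1 ≤ φ x := by
    rintro x ⟨hxl, hxr⟩
    refine (ψ.one_of_mem_closedBall ?_).ge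
    rw [mem_closedBall_zero_iff, norm_smul, norm_inv, Real.norm_eq_abs, Real.norm_eq_abs,
      abs_of_pos hr0, inv_mul_le_one₀ hr0, abs_le]
    exact ⟨hxl.le, hxr.le⟩
  calc ν (Set.Ioo (-r) r) ≤ ENNReal.ofReal (∫ x, φ x ∂ν) :=
        (hint φ).measure_le_integral (ae_of_all _ fun _ ↦ ψ.nonneg) hφ_one
    _ ≤ ENNReal.ofReal (C * r ^ (K : ℝ)) := by
        rw [← hS, Real.rpow_natCast]
        exact ENNReal.ofReal_le_ofReal ((le_abs_self _).trans (hC r hr φ rfl))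

/-- **Lemma.** Let `ν` be a positive locally finite measure on ℝ which is a tempered
distribution: every Schwartz function is `ν`-integrable and `φ ↦ ∫ φ dν` is continuous
on the Schwartz space. Then there are `T, C < ∞` with `ν((-r, r)) ≤ C rᵀ` for `r ≥ 1`. -/
theorem tempered_measure_has_polynomial_growth
    (ν : Measure ℝ) [IsLocallyFiniteMeasure ν]
    (hint : ∀ φ : SchwartzMap ℝ ℝ, Integrable (⇑φ) ν)
    (hcont : ∃ S : SchwartzMap ℝ ℝ →L[ℝ] ℝ, ∀ φ : SchwartzMap ℝ ℝ, S φ = ∫ x, φ x ∂ν) :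
    ∃ T C : ℝ, ∀ r : ℝ, 1 ≤ r → ν (Set.Ioo (-r) r) ≤ ENNReal.ofReal (C * r ^ T) :=
  tempered_measure_has_polynomial_growth_general ν hint hcont

end
end

section
/- Let (τ_p) be positive numbers and (λ_p) real numbers such that for every n: Σ_{p<n} τ_p^{−1/3} < (1/3) τ_n^{−1/3} and Σ_{p>n} τ_p^{2/3} < 2 τ_n^{2/3}/(3π). Then for every n, setting t = 1/(2τ_n), the series Σ_p τ_p^{−1/3} (e^{−2πi(λ_p + τ_p)t} − e^{−2πi λ_p t}) converges absolutely and its modulus is at least (2/3) τ_n^{−1/3}. -/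
open Filter Real Complex

noncomputable section

private lemma two_I_sin (z : ℂ) : Complex.exp (z * Complex.I) - Complex.exp (-z * Complex.I)
    = 2 * Complex.I * Complex.sin z := by
  rw [Complex.sin]; field_simp; ring_nf
  simp [Complex.I_sq]; ring

private lemma norm_exp_mul_I_sub_one (θ : ℝ) : ‖Complex.exp ((θ:ℂ) * Complex.I) - 1‖ ≤ |θ| := by
  have h1 : Complex.exp ((θ:ℂ) * Complex.I) - 1
      = Complex.exp (((θ/2 : ℝ):ℂ) * Complex.I) *
        (Complex.exp (((θ/2:ℝ):ℂ) * Complex.I) - Complex.exp (-((θ/2:ℝ):ℂ) * Complex.I)) := by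
    rw [mul_sub, ← Complex.exp_add, ← Complex.exp_add]
    push_cast
    have e1 : (θ:ℂ)/2 * Complex.I + (θ:ℂ)/2 * Complex.I = (θ:ℂ) * Complex.I := by ring
    have e2 : (θ:ℂ)/2 * Complex.I + -((θ:ℂ)/2) * Complex.I = 0 := by ring
    rw [e1, e2, Complex.exp_zero]
  rw [h1, two_I_sin, norm_mul]
  have h2 : ‖Complex.exp (((θ/2 : ℝ):ℂ) * Complex.I)‖ = 1 := by
    rw [Complex.norm_exp_ofReal_mul_I]
  have h3 : Complex.sin ((θ/2 : ℝ):ℂ) = ((Real.sin (θ/2) : ℝ) : ℂ) := (Complex.ofReal_sin _).symm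
  rw [h2, one_mul, h3]
  have : ‖(2 : ℂ) * Complex.I * ((Real.sin (θ/2) : ℝ) : ℂ)‖ = 2 * |Real.sin (θ/2)| := by
    rw [norm_mul, norm_mul, Complex.norm_real, Complex.norm_I, Real.norm_eq_abs]
    norm_num
  rw [this]
  have := Real.abs_sin_le_abs (x := θ/2)
  calc 2 * |Real.sin (θ/2)| ≤ 2 * |θ/2| := by linarith
    _ = |θ| := by rw [abs_div]; norm_num; ring

private lemma diff_eq (x y : ℝ) :
    Complex.exp (-(2 * Real.pi * Complex.I * (x:ℂ))) - Complex.exp (-(2 * Real.pi * Complex.I * (y:ℂ)))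
    = Complex.exp (-(2 * Real.pi * Complex.I * (y:ℂ))) *
      (Complex.exp (((-(2*Real.pi*(x-y)) : ℝ):ℂ) * Complex.I) - 1) := by
  rw [mul_sub, mul_one, ← Complex.exp_add]
  push_cast
  ring_nf

private lemma norm_exp_real (y : ℝ) : ‖Complex.exp (-(2 * Real.pi * Complex.I * (y:ℂ)))‖ = 1 := by
  have e : -(2 * (Real.pi:ℂ) * Complex.I * (y:ℂ)) = ((-(2*Real.pi*y) : ℝ):ℂ) * Complex.I := by
    push_cast; ring
  rw [e, Complex.norm_exp_ofReal_mul_I]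

private lemma diff_norm_le (x y : ℝ) :
    ‖Complex.exp (-(2 * Real.pi * Complex.I * (x:ℂ))) - Complex.exp (-(2 * Real.pi * Complex.I * (y:ℂ)))‖
      ≤ 2 * Real.pi * |x - y| := by
  rw [diff_eq, norm_mul, norm_exp_real, one_mul]
  refine (norm_exp_mul_I_sub_one _).trans_eq ?_
  rw [abs_neg, abs_mul, _root_.abs_of_nonneg (by positivity : (0:ℝ) ≤ 2 * Real.pi)]

private lemma diff_norm_le_two (x y : ℝ) :
    ‖Complex.exp (-(2 * Real.pi * Complex.I * (x:ℂ))) - Complex.exp (-(2 * Real.pi * Complex.I * (y:ℂ)))‖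
      ≤ 2 := by
  refine (norm_sub_le _ _).trans ?_
  rw [norm_exp_real, norm_exp_real]; norm_num

private lemma diff_norm_eq_two (x y : ℝ) (h : x = y + 1/2) :
    ‖Complex.exp (-(2 * Real.pi * Complex.I * (x:ℂ))) - Complex.exp (-(2 * Real.pi * Complex.I * (y:ℂ)))‖
      = 2 := by
  rw [diff_eq, norm_mul, norm_exp_real, one_mul]
  have e : ((-(2*Real.pi*(x-y)) : ℝ):ℂ) * Complex.I = -(Real.pi * Complex.I) := by
    rw [h]; push_cast; ring
  rw [e, Complex.exp_neg, Complex.exp_pi_mul_I]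
  norm_num

/-- **Lemma.** Let `(τ_p)` be positive and `(λ_p)` real with, for every `n`,
`Σ_{p<n} τ_p^{-1/3} < (1/3) τ_n^{-1/3}` and `Σ_{p>n} τ_p^{2/3} < 2 τ_n^{2/3}/(3π)`
(the latter series converging). Then for every `n`, taking `t = 1/(2τ_n)`, the series
`Σ_p τ_p^{-1/3} (e^{-2πi(λ_p + τ_p)t} - e^{-2πi λ_p t})` converges absolutely and its
modulus is at least `(2/3) τ_n^{-1/3}`. -/
theorem series_lower_bound
    (tau lam : ℕ → ℝ) (htau_pos : ∀ p, 0 < tau p)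
    (hsummable : Summable fun p => tau p ^ ((2 : ℝ) / 3))
    (h1 : ∀ n : ℕ, ∑ p ∈ Finset.range n, tau p ^ (-(1 : ℝ) / 3)
        < (1 / 3) * tau n ^ (-(1 : ℝ) / 3))
    (h2 : ∀ n : ℕ, ∑' p : ℕ, tau (n + 1 + p) ^ ((2 : ℝ) / 3)
        < 2 * tau n ^ ((2 : ℝ) / 3) / (3 * Real.pi)) :
    ∀ n : ℕ, ∀ t : ℝ, t = 1 / (2 * tau n) →
      Summable (fun p : ℕ => ‖((tau p ^ (-(1 : ℝ) / 3) : ℝ) : ℂ) *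
        (Complex.exp (-(2 * Real.pi * Complex.I * (((lam p + tau p) * t : ℝ) : ℂ)))
          - Complex.exp (-(2 * Real.pi * Complex.I * ((lam p * t : ℝ) : ℂ))))‖) ∧
      (2 / 3) * tau n ^ (-(1 : ℝ) / 3) ≤
        ‖∑' p : ℕ, ((tau p ^ (-(1 : ℝ) / 3) : ℝ) : ℂ) *
          (Complex.exp (-(2 * Real.pi * Complex.I * (((lam p + tau p) * t : ℝ) : ℂ)))
            - Complex.exp (-(2 * Real.pi * Complex.I * ((lam p * t : ℝ) : ℂ))))‖ := by
  classical
  intro n t ht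
  have hπ := Real.pi_pos
  have htn := htau_pos n
  have ht0 : 0 < t := by rw [ht]; positivity
  set f : ℕ → ℂ := fun p : ℕ => ((tau p ^ (-(1 : ℝ) / 3) : ℝ) : ℂ) *
        (Complex.exp (-(2 * Real.pi * Complex.I * (((lam p + tau p) * t : ℝ) : ℂ)))
          - Complex.exp (-(2 * Real.pi * Complex.I * ((lam p * t : ℝ) : ℂ)))) with hf
  have hcpos : ∀ p, (0:ℝ) < tau p ^ (-(1 : ℝ)/3) :=
    fun p => Real.rpow_pos_of_pos (htau_pos p) _
  have hct : ∀ p, tau p ^ (-(1:ℝ)/3) * tau p = tau p ^ ((2:ℝ)/3) := by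
    intro p
    have h := Real.rpow_add (htau_pos p) (-(1:ℝ)/3) 1
    rw [Real.rpow_one] at h
    rw [show ((2:ℝ)/3) = -(1:ℝ)/3 + 1 by norm_num, h]
  have hnormf : ∀ p, ‖f p‖ = tau p ^ (-(1:ℝ)/3) *
      ‖Complex.exp (-(2 * Real.pi * Complex.I * (((lam p + tau p) * t : ℝ) : ℂ)))
          - Complex.exp (-(2 * Real.pi * Complex.I * ((lam p * t : ℝ) : ℂ)))‖ := by
    intro p
    rw [hf]
    rw [norm_mul, Complex.norm_real, Real.norm_eq_abs, _root_.abs_of_pos (hcpos p)]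
  have hb1 : ∀ p, ‖f p‖ ≤ 2 * Real.pi * t * tau p ^ ((2:ℝ)/3) := by
    intro p
    rw [hnormf p]
    have hd := diff_norm_le ((lam p + tau p) * t) (lam p * t)
    have he : |(lam p + tau p) * t - lam p * t| = tau p * t := by
      rw [show (lam p + tau p) * t - lam p * t = tau p * t by ring]
      exact _root_.abs_of_pos (by have := htau_pos p; positivity)
    rw [he] at hd
    refine le_trans (mul_le_mul_of_nonneg_left hd (hcpos p).le) (le_of_eq ?_)
    rw [← hct p]; ring
  have hb2 : ∀ p, ‖f p‖ ≤ 2 * tau p ^ (-(1:ℝ)/3) := by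
    intro p
    rw [hnormf p]
    refine le_trans (mul_le_mul_of_nonneg_left (diff_norm_le_two _ _) (hcpos p).le)
      (le_of_eq (by ring))
  have htn2 : tau n * t = 1/2 := by rw [ht]; field_simp
  have hbn : ‖f n‖ = 2 * tau n ^ (-(1:ℝ)/3) := by
    rw [hnormf n, diff_norm_eq_two _ _ (by rw [← htn2]; ring)]
    ring
  have hsumb : Summable (fun p => 2 * Real.pi * t * tau p ^ ((2:ℝ)/3)) :=
    hsummable.mul_left _
  have hFnorm : Summable (fun p => ‖f p‖) :=
    Summable.of_nonneg_of_le (fun p => norm_nonneg _) hb1 hsumb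
  have hF : Summable f := hFnorm.of_norm
  constructor
  · simpa only [hf] using hFnorm
  -- lower bound
  have hsplit := Summable.tsum_eq_add_tsum_ite hF n
  set R : ℂ := ∑' p, if p = n then 0 else f p with hR
  -- summability of pieces
  have hg1 : Summable (fun p => if p < n then 2 * tau p ^ (-(1:ℝ)/3) else 0) := by
    apply summable_of_ne_finset_zero (s := Finset.range n)
    intro p hp
    rw [if_neg]
    simpa [Finset.mem_range] using hp
  have hg2 : Summable (fun p => if n < p then 2 * Real.pi * t * tau p ^ ((2:ℝ)/3) else 0) := by
    have hnn : ∀ p, (0:ℝ) ≤ 2 * Real.pi * t * tau p ^ ((2:ℝ)/3) := fun p =>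
      mul_nonneg (by positivity) (Real.rpow_pos_of_pos (htau_pos p) _).le
    refine Summable.of_nonneg_of_le (fun p => ?_) (fun p => ?_) hsumb
    · split
      · exact hnn p
      · exact le_rfl
    · split
      · exact le_rfl
      · exact hnn p
  have hRsum : Summable (fun p => ‖if p = n then (0:ℂ) else f p‖) := by
    refine Summable.of_nonneg_of_le (fun p => norm_nonneg _) (fun p => ?_) hFnorm
    split <;> simp [norm_nonneg]
  have hRle : ‖R‖ ≤ (∑' p, if p < n then 2 * tau p ^ (-(1:ℝ)/3) else 0)
      + ∑' p, if n < p then 2 * Real.pi * t * tau p ^ ((2:ℝ)/3) else 0 := by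
    rw [hR]
    refine le_trans (norm_tsum_le_tsum_norm hRsum) ?_
    rw [← Summable.tsum_add hg1 hg2]
    refine Summable.tsum_le_tsum (fun p => ?_) hRsum (hg1.add hg2)
    rcases lt_trichotomy p n with h | h | h
    · rw [if_neg (by omega), if_pos h, if_neg (by omega), add_zero]
      exact hb2 p
    · subst h
      rw [if_pos rfl, if_neg (by omega), if_neg (by omega)]
      simp
    · rw [if_neg (by omega), if_neg (by omega), if_pos h, zero_add]
      exact hb1 p
  -- first piece
  have hS1 : (∑' p, if p < n then 2 * tau p ^ (-(1:ℝ)/3) else 0)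
      ≤ (2/3) * tau n ^ (-(1:ℝ)/3) := by
    rw [tsum_eq_sum (s := Finset.range n)
      (by intro p hp; rw [if_neg]; simpa [Finset.mem_range] using hp)]
    have : ∑ p ∈ Finset.range n, (if p < n then 2 * tau p ^ (-(1:ℝ)/3) else 0)
        = 2 * ∑ p ∈ Finset.range n, tau p ^ (-(1:ℝ)/3) := by
      rw [Finset.mul_sum]
      refine Finset.sum_congr rfl (fun p hp => ?_)
      rw [if_pos (Finset.mem_range.mp hp)]
    rw [this]
    have := h1 n
    linarith
  -- second piece
  have hS2 : (∑' p, if n < p then 2 * Real.pi * t * tau p ^ ((2:ℝ)/3) else 0)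
      ≤ (2/3) * tau n ^ (-(1:ℝ)/3) := by
    have hsplit2 := Summable.sum_add_tsum_nat_add (n+1) hg2
    have hz : ∑ i ∈ Finset.range (n+1),
        (if n < i then 2 * Real.pi * t * tau i ^ ((2:ℝ)/3) else 0) = 0 := by
      refine Finset.sum_eq_zero (fun i hi => ?_)
      rw [if_neg]
      have := Finset.mem_range.mp hi
      omega
    rw [hz, zero_add] at hsplit2
    rw [← hsplit2]
    have hcong : (fun i => if n < i + (n+1) then 2 * Real.pi * t * tau (i + (n+1)) ^ ((2:ℝ)/3) else 0)
        = fun i => 2 * Real.pi * t * tau (n + 1 + i) ^ ((2:ℝ)/3) := by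
      funext i
      rw [if_pos (by omega), Nat.add_comm i (n+1)]
    rw [show (∑' (i : ℕ), if n < i + (n + 1) then 2 * Real.pi * t * tau (i + (n + 1)) ^ ((2:ℝ)/3) else 0)
        = ∑' (i : ℕ), 2 * Real.pi * t * tau (n + 1 + i) ^ ((2:ℝ)/3) from by rw [hcong]]
    rw [tsum_mul_left]
    have hlt := h2 n
    have h2πt : (0:ℝ) < 2 * Real.pi * t := by positivity
    have : 2 * Real.pi * t * (∑' (p : ℕ), tau (n + 1 + p) ^ ((2:ℝ)/3))
        ≤ 2 * Real.pi * t * (2 * tau n ^ ((2:ℝ)/3) / (3 * Real.pi)) :=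
      mul_le_mul_of_nonneg_left hlt.le h2πt.le
    refine this.trans (le_of_eq ?_)
    rw [ht, ← hct n]
    field_simp
  -- combine
  have htri : ‖f n‖ - ‖R‖ ≤ ‖f n + R‖ := by
    have h := norm_sub_le (f n + R) R
    rw [add_sub_cancel_right] at h
    linarith
  have hfinal : (2/3) * tau n ^ (-(1:ℝ)/3) ≤ ‖tsum f‖ := by
    rw [show tsum f = f n + R from hsplit]
    rw [hbn] at htri
    linarith
  exact hfinal
end
end

section
/- Let α ∈ (0, 1/6). Then there exists M_α such that for every integer M > M_α there exists a nonzero complex measure σ on ℝ with discrete support which is M-periodic (invariant under translation by M), is a tempered distribution whose distributional Fourier transform σ̂ is also a complex measure with discrete support, and such that supp σ ∪ supp σ̂ ⊂ M^{−1}ℤ \ [−αM, αM]. -/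
open MeasureTheory SchwartzMap Filter FourierTransform Real Complex

noncomputable section

/-- Tempered distributions on ℝ. -/
abbrev TemperedDistribution1D := SchwartzMap ℝ ℂ →L[ℂ] ℂ

/-- A set `E ⊆ ℝ` is discrete if its intersection with every bounded interval is finite. -/
def IsDiscreteSet (E : Set ℝ) : Prop := ∀ r : ℝ, (E ∩ Set.Icc (-r) r).Finite

/-- `T` is the tempered distribution associated with the (locally finite, atomic) complex
measure `μ = Σ_λ c λ · δ_λ`: on every compactly supported test function the two agree
(the sum below is then a finite sum). -/
def Represents (T : TemperedDistribution1D) (c : ℝ → ℂ) : Prop :=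
  ∀ φ : SchwartzMap ℝ ℂ, HasCompactSupport ⇑φ → T φ = ∑' x : ℝ, c x * φ x

/-- Fourier transform of a tempered distribution: `T̂(φ) = T(φ̂)`, where the Fourier
transform on Schwartz space uses the kernel `e^{-2πixt}`. -/
def fourierTD (T : TemperedDistribution1D) : TemperedDistribution1D :=
  T.comp (fourierTransformCLM ℂ)


lemma sumBase : Summable (fun k : ℤ => ((1 + |(k:ℝ)|)^2)⁻¹) := by
  have h2 : Summable (fun n : ℕ => ((1 + (n:ℝ))^2)⁻¹) := by
    have h1 : Summable (fun n : ℕ => (((n:ℝ))^2)⁻¹) := by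
      simpa [one_div] using summable_one_div_nat_pow.2 one_lt_two
    have := (summable_nat_add_iff (f := fun n : ℕ => (((n:ℝ))^2)⁻¹) 1).2 h1
    apply this.congr
    intro n
    push_cast
    ring_nf
  apply Summable.of_nat_of_neg
  · apply h2.congr; intro n; simp
  · apply h2.congr; intro n; simp

lemma schwartzBound (φ : SchwartzMap ℝ ℂ) {Mr : ℝ} (hM : 1 ≤ Mr) (k : ℤ) :
    ‖φ ((k:ℝ)/Mr)‖ ≤ (4 * Mr^2 * ((1 + |(k:ℝ)|)^2)⁻¹) *
      ((Finset.Iic ((2:ℕ),(0:ℕ))).sup (schwartzSeminormFamily ℂ ℝ ℂ)) φ := by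
  have hM0 : 0 < Mr := lt_of_lt_of_le one_pos hM
  set x : ℝ := (k:ℝ)/Mr with hx
  have hbase := SchwartzMap.one_add_le_sup_seminorm_apply (𝕜 := ℂ) (m := (2,0))
    (k := 2) (n := 0) le_rfl le_rfl φ x
  rw [norm_iteratedFDeriv_zero] at hbase
  set Sφ : ℝ := ((Finset.Iic ((2:ℕ),(0:ℕ))).sup (schwartzSeminormFamily ℂ ℝ ℂ)) φ with hSφ
  have hSnn : 0 ≤ Sφ := apply_nonneg _ _
  have hxnorm : ‖x‖ = |(k:ℝ)| / Mr := by
    rw [hx, norm_div, Real.norm_eq_abs, Real.norm_eq_abs, abs_of_pos hM0]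
  have hkey : 1 + |(k:ℝ)| ≤ Mr * (1 + ‖x‖) := by
    rw [hxnorm]
    have : Mr * (1 + |(k:ℝ)| / Mr) = Mr + |(k:ℝ)| := by field_simp
    rw [this]; linarith
  have hsq : (1 + |(k:ℝ)|)^2 ≤ Mr^2 * (1 + ‖x‖)^2 := by
    rw [← mul_pow]
    apply pow_le_pow_left₀ (by positivity) hkey
  have h1 : (1 + ‖x‖)^2 * ‖φ x‖ ≤ 4 * Sφ := by
    calc (1 + ‖x‖)^2 * ‖φ x‖ ≤ 2^(2:ℕ) * Sφ := hbase
    _ = 4 * Sφ := by norm_num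
  have hpos : (0:ℝ) < (1 + ‖x‖)^2 := by positivity
  have hpos2 : (0:ℝ) < (1 + |(k:ℝ)|)^2 := by positivity
  have hnn : 0 ≤ ‖φ x‖ := norm_nonneg _
  rw [show (4 * Mr^2 * ((1 + |(k:ℝ)|)^2)⁻¹) * Sφ = (4*Mr^2*Sφ) * ((1 + |(k:ℝ)|)^2)⁻¹ by ring,
    ← div_eq_mul_inv, le_div_iff₀ hpos2]
  nlinarith [mul_le_mul_of_nonneg_right hsq hnn, mul_le_mul_of_nonneg_left h1 (sq_nonneg Mr)]

lemma schwartzSummable (φ : SchwartzMap ℝ ℂ) {Mr : ℝ} (hM : 1 ≤ Mr) :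
    Summable (fun k : ℤ => ‖φ ((k:ℝ)/Mr)‖) := by
  apply Summable.of_nonneg_of_le (fun k => norm_nonneg _) (schwartzBound φ hM)
  have := (sumBase.mul_left (4 * Mr^2)).mul_right
    (((Finset.Iic ((2:ℕ),(0:ℕ))).sup (schwartzSeminormFamily ℂ ℝ ℂ)) φ)
  simpa [mul_assoc] using this

/-- The function on `ℝ` built from a function on `(1/M)ℤ` given by `g` on indices. -/
def meyerFun (M : ℕ) (g : ℤ → ℂ) : ℝ → ℂ := fun x =>
  if ((round (x * M) : ℤ) : ℝ) = x * M then g (round (x * M)) else 0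

lemma meyerFun_apply_div {M : ℕ} (hM : 0 < M) (g : ℤ → ℂ) (k : ℤ) :
    meyerFun M g ((k:ℝ)/M) = g k := by
  have hM0 : (M:ℝ) ≠ 0 := Nat.cast_ne_zero.2 hM.ne'
  have h : ((k:ℝ)/M) * M = (k:ℝ) := div_mul_cancel₀ _ hM0
  simp [meyerFun, h, round_intCast]

lemma meyerFun_ne_zero {M : ℕ} (hM : 0 < M) (g : ℤ → ℂ) {x : ℝ}
    (h : meyerFun M g x ≠ 0) :
    ∃ k : ℤ, x = (k:ℝ)/M ∧ g k ≠ 0 := by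
  have hM0 : (M:ℝ) ≠ 0 := Nat.cast_ne_zero.2 hM.ne'
  by_cases hc : ((round (x * M) : ℤ) : ℝ) = x * M
  · refine ⟨round (x * M), ?_, ?_⟩
    · rw [eq_div_iff hM0]; exact hc.symm
    · simpa [meyerFun, hc] using h
  · exact absurd (by simp [meyerFun, hc]) h

lemma meyerFun_tsum {M : ℕ} (hM : 0 < M) (g : ℤ → ℂ) (ψ : ℝ → ℂ) :
    ∑' x : ℝ, meyerFun M g x * ψ x = ∑' k : ℤ, g k * ψ ((k:ℝ)/M) := by
  have hM0 : (M:ℝ) ≠ 0 := Nat.cast_ne_zero.2 hM.ne'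
  apply tsum_eq_tsum_of_ne_zero_bij
    (i := fun k => ((k : ℤ) : ℝ)/M)
  · intro a b hab
    field_simp at hab
    exact Subtype.ext (by exact_mod_cast hab)
  · intro x hx
    have hmf : meyerFun M g x ≠ 0 := fun h0 => hx (by simp [h0])
    obtain ⟨k, hk, hgk⟩ := meyerFun_ne_zero hM g hmf
    have hsup : g k * ψ ((k:ℝ)/M) ≠ 0 := by
      have h2 : meyerFun M g x = g k := by rw [hk]; exact meyerFun_apply_div hM g k
      rw [← hk, ← h2]
      exact hx
    exact ⟨⟨k, hsup⟩, hk.symm⟩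
  · intro ⟨k, hk⟩
    simp only
    rw [meyerFun_apply_div hM g k]

lemma meyerFun_discrete {M : ℕ} (hM : 0 < M) (g : ℤ → ℂ) :
    ∀ r : ℝ, (Function.support (meyerFun M g) ∩ Set.Icc (-r) r).Finite := by
  intro r
  have hM0 : (0:ℝ) < M := Nat.cast_pos.2 hM
  apply Set.Finite.subset (Set.Finite.image (f := fun k : ℤ => (k:ℝ)/M)
    (Set.finite_Icc ⌈-(r * M)⌉ ⌊r * M⌋))
  rintro x ⟨hx, hx1, hx2⟩
  obtain ⟨k, hk, -⟩ := meyerFun_ne_zero hM g hx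
  refine ⟨k, ⟨?_, ?_⟩, hk.symm⟩
  · rw [Int.ceil_le]
    have : -(r * M) ≤ x * M := by nlinarith
    rw [hk] at this
    calc (-(r*M)) ≤ (k:ℝ)/M * M := this
    _ = k := div_mul_cancel₀ _ hM0.ne'
  · rw [Int.le_floor]
    have : x * M ≤ r * M := by nlinarith
    rw [hk] at this
    calc (k:ℝ) = (k:ℝ)/M * M := (div_mul_cancel₀ _ hM0.ne').symm
    _ ≤ r * M := this

lemma meyerFun_periodic {M : ℕ} (hM : 0 < M) (g : ℤ → ℂ)
    (hg : ∀ k : ℤ, g (k + (M^2 : ℕ)) = g k) (x : ℝ) :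
    meyerFun M g (x + M) = meyerFun M g x := by
  have h1 : (x + M) * M = x * M + ((M^2 : ℕ) : ℤ) := by push_cast; ring
  have h2 : round ((x + M) * M) = round (x * M) + ((M^2 : ℕ) : ℤ) := by
    rw [h1, round_add_intCast]
  unfold meyerFun
  rw [h2, h1]
  by_cases hc : ((round (x * M) : ℤ) : ℝ) = x * M
  · have hc' : ((round (x * M) + ((M^2:ℕ):ℤ) : ℤ) : ℝ) = x * M + ((M^2 : ℕ) : ℤ) := by
      push_cast at hc ⊢; linarith
    rw [if_pos hc', if_pos hc, hg]
  · have hc' : ¬ ((round (x * M) + ((M^2:ℕ):ℤ) : ℤ) : ℝ) = x * M + ((M^2 : ℕ) : ℤ) := by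
      push_cast at hc ⊢; intro h; apply hc; linarith
    rw [if_neg hc', if_neg hc]

lemma keyPoisson {M : ℕ} (hM : 0 < M) (φ : SchwartzMap ℝ ℂ) (y : ℝ) :
    ∑' n : ℤ, 𝓕 (⇑φ) ((y + n) * M)
      = (M:ℂ)⁻¹ * ∑' n : ℤ, φ ((n:ℝ)/M) * Complex.exp (-(2 * ↑π * Complex.I * n * y)) := by
  have hM0 : (0:ℝ) < M := Nat.cast_pos.2 hM
  set u : ℝˣ := Units.mk0 (M:ℝ) hM0.ne' with hu
  set e : ℝ ≃L[ℝ] ℝ := ContinuousLinearEquiv.unitsEquivAut ℝ u with he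
  set ψ : SchwartzMap ℝ ℂ := fourierTransformCLM ℝ φ with hψ
  set g : SchwartzMap ℝ ℂ := compCLMOfContinuousLinearEquiv ℝ e ψ with hgdef
  have hg : ∀ t : ℝ, g t = 𝓕 (⇑φ) (t * M) := by
    intro t
    have h1 : g t = ψ (e t) := rfl
    have h2 : e t = t * M := rfl
    rw [h1, h2, hψ, fourierTransformCLM_apply, SchwartzMap.fourier_coe]
  have hint : Integrable (𝓕 (⇑φ)) := by
    rw [← SchwartzMap.fourier_coe φ, ← fourierTransformCLM_apply ℝ φ]
    exact (fourierTransformCLM ℝ φ).integrable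
  have hinv : ∀ x : ℝ, 𝓕 (𝓕 (⇑φ)) x = φ (-x) := by
    intro x
    have h1 := fourierInv_eq_fourier_neg (𝓕 (⇑φ)) (-x)
    rw [neg_neg] at h1
    rw [← h1]
    exact MeasureTheory.Integrable.fourierInv_fourier_eq φ.integrable hint (φ.continuous.continuousAt)
  have hgf : ∀ w : ℝ, 𝓕 (⇑g) w = ((M:ℝ)⁻¹ : ℝ) • φ (-(w / M)) := by
    intro w
    set G : ℝ → ℂ := fun z : ℝ => Complex.exp (↑(-2 * π * (z / M) * w) * Complex.I)
        • 𝓕 (⇑φ) z with hG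
    have h2 : 𝓕 (⇑g) w = ∫ v:ℝ, G ((M:ℝ) * v) := by
      rw [Real.fourier_real_eq_integral_exp_smul]
      congr 1
      funext v
      rw [hG]
      simp only
      rw [hg v]
      have hv : ((M:ℝ) * v) / M = v := by field_simp
      rw [hv, mul_comm (M:ℝ) v]
    rw [h2, MeasureTheory.Measure.integral_comp_mul_left G (M:ℝ), abs_of_pos (inv_pos.2 hM0)]
    have h3 : ∫ z:ℝ, G z = 𝓕 (𝓕 (⇑φ)) (w / M) := by
      rw [Real.fourier_real_eq_integral_exp_smul]
      congr 1
      funext z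
      rw [hG]
      simp only
      have : -2 * π * (z/M) * w = -2 * π * z * (w/M) := by ring
      rw [this]
    rw [h3, hinv]
  have hP := SchwartzMap.tsum_eq_tsum_fourier g y
  have hL : ∑' n : ℤ, g (y + n) = ∑' n : ℤ, 𝓕 (⇑φ) ((y + n) * M) :=
    tsum_congr fun n => hg _
  rw [hL] at hP
  rw [hP]
  have hR : ∀ n : ℤ, (𝓕 g) ((n:ℤ):ℝ) * fourier n (y : UnitAddCircle)
      = (M:ℂ)⁻¹ * (φ (-((n:ℝ)/M)) * Complex.exp (2 * ↑π * Complex.I * n * y)) := by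
    intro n
    rw [SchwartzMap.fourier_coe g]
    rw [hgf, fourier_coe_apply]
    rw [Complex.real_smul]
    push_cast
    rw [div_one]
    ring
  rw [tsum_congr hR, tsum_mul_left]
  congr 1
  have hneg := Equiv.tsum_eq (Equiv.neg ℤ)
    (fun n : ℤ => φ ((n:ℝ)/M) * Complex.exp (-(2 * ↑π * Complex.I * n * y)))
  rw [← hneg]
  apply tsum_congr
  intro n
  simp only [Equiv.neg_apply, Int.cast_neg, neg_div]
  congr 1
  congr 1
  ring

lemma exists_c0 (N : ℕ) [NeZero N] (S : Finset (ZMod N)) (hS : 2 * S.card < N) :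
    ∃ c₀ : ZMod N → ℂ, c₀ ≠ 0 ∧ (∀ j ∈ S, c₀ j = 0) ∧ (∀ j ∈ S, ZMod.dft c₀ j = 0) := by
  set L : (ZMod N → ℂ) →ₗ[ℂ] (({x // x ∈ S} → ℂ) × ({x // x ∈ S} → ℂ)) :=
    (LinearMap.funLeft ℂ ℂ (Subtype.val : {x // x ∈ S} → ZMod N)).prod
      ((LinearMap.funLeft ℂ ℂ (Subtype.val : {x // x ∈ S} → ZMod N)).comp
        (ZMod.dft (N := N) (E := ℂ)).toLinearMap) with hL
  have hni : ¬ Function.Injective L := by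
    intro hinj
    have hle := LinearMap.finrank_le_finrank_of_injective hinj
    rw [Module.finrank_pi, Module.finrank_prod, Module.finrank_pi,
      Fintype.card_coe, ZMod.card] at hle
    omega
  have hker : LinearMap.ker L ≠ ⊥ := fun h => hni (LinearMap.ker_eq_bot.mp h)
  obtain ⟨c₀, hmem, hne⟩ := (Submodule.ne_bot_iff _).1 hker
  rw [LinearMap.mem_ker] at hmem
  refine ⟨c₀, hne, ?_, ?_⟩
  · intro j hj
    have := congrArg Prod.fst hmem
    exact congrFun this ⟨j, hj⟩
  · intro j hj
    have := congrArg Prod.snd hmem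
    exact congrFun this ⟨j, hj⟩

/-- The `ℤ ≃ ZMod N × ℤ` decomposition. -/
def zdecomp (N : ℕ) [NeZero N] : ZMod N × ℤ ≃ ℤ where
  toFun p := (p.1.val : ℤ) + p.2 * N
  invFun k := ((k : ZMod N), k / (N:ℤ))
  left_inv p := by
    have hN : (N:ℤ) ≠ 0 := Int.natCast_ne_zero.2 (NeZero.ne N)
    obtain ⟨r, n⟩ := p
    have h1 : (((r.val : ℤ) + n * N : ℤ) : ZMod N) = r := by
      push_cast
      simp [ZMod.natCast_self, ZMod.natCast_rightInverse r]
    have h2 : ((r.val : ℤ) + n * N) / N = n := by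
      rw [Int.add_mul_ediv_right _ _ hN, Int.ediv_eq_zero_of_lt (Int.natCast_nonneg _)
        (by exact_mod_cast ZMod.val_lt r), zero_add]
    simp only [Prod.mk.injEq]
    exact ⟨h1, h2⟩
  right_inv k := by
    simp only
    rw [ZMod.val_intCast]
    have := Int.emod_add_ediv_mul k (N:ℤ)
    linarith [this]

set_option maxHeartbeats 1000000 in
lemma keyDFT {M : ℕ} (hM : 3 ≤ M) [NeZero (M^2)] (c₀ : ZMod (M^2) → ℂ)
    (φ : SchwartzMap ℝ ℂ) :
    ∑' k : ℤ, c₀ ((k : ℤ) : ZMod (M^2)) * 𝓕 (⇑φ) ((k:ℝ)/M)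
      = ∑' n : ℤ, ((M:ℂ)⁻¹ * ZMod.dft c₀ ((n : ℤ) : ZMod (M^2))) * φ ((n:ℝ)/M) := by
  have hM0 : 0 < M := by omega
  have hMr1 : (1:ℝ) ≤ M := by exact_mod_cast hM0
  have hMne : (M:ℝ) ≠ 0 := by positivity
  set ψ : SchwartzMap ℝ ℂ := fourierTransformCLM ℝ φ with hψ
  have hψc : ∀ x : ℝ, 𝓕 (⇑φ) x = ψ x := by
    intro x; rw [hψ, fourierTransformCLM_apply, SchwartzMap.fourier_coe]
  set B : ℝ := ∑ j : ZMod (M^2), ‖c₀ j‖ with hB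
  have hBle : ∀ j : ZMod (M^2), ‖c₀ j‖ ≤ B :=
    fun j => Finset.single_le_sum (fun i _ => norm_nonneg (c₀ i)) (Finset.mem_univ j)
  set F : ℤ → ℂ := fun k => c₀ ((k : ℤ) : ZMod (M^2)) * 𝓕 (⇑φ) ((k:ℝ)/M)
    with hF
  have hFsum : Summable F := by
    apply Summable.of_norm_bounded (g := fun k : ℤ => B * ‖ψ ((k:ℝ)/M)‖)
      ((schwartzSummable ψ hMr1).mul_left B)
    intro k
    rw [hF]
    simp only
    rw [norm_mul, hψc]
    gcongr
    exact hBle _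
  have hdec := ((zdecomp (M^2)).tsum_eq F).symm
  rw [hdec, Summable.tsum_prod (f := fun c : ZMod (M^2) × ℤ => F ((zdecomp (M^2)) c)) ((zdecomp (M^2)).summable_iff.2 hFsum)]
  have hinner : ∀ r : ZMod (M^2),
      ∑' n : ℤ, F (zdecomp (M^2) (r, n))
        = ∑' n : ℤ, c₀ r * ((M:ℂ)⁻¹ * (φ ((n:ℝ)/M)
            * Complex.exp (-(2 * ↑π * Complex.I * n * ((((r.val : ℝ)/(M:ℝ)^2) : ℝ) : ℂ))))) := by
    intro r
    have hstep : ∀ n : ℤ, F (zdecomp (M^2) (r, n))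
        = c₀ r * 𝓕 (⇑φ) (((r.val : ℝ)/(M:ℝ)^2 + (n:ℝ)) * (M:ℝ)) := by
      intro n
      rw [hF]
      simp only [zdecomp, Equiv.coe_fn_mk]
      have hM2 : ((M : ZMod (M^2)))^2 = 0 := by
        rw [← Nat.cast_pow]; exact ZMod.natCast_self _
      have hcast : (((r.val : ℤ) + n * ((M^2:ℕ):ℤ) : ℤ) : ZMod (M^2)) = r := by
        push_cast
        simp [hM2, ZMod.natCast_rightInverse r]
      have harg : ((((r.val : ℤ) + n * ((M^2:ℕ):ℤ) : ℤ)) : ℝ)/(M:ℝ)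
          = ((r.val : ℝ)/(M:ℝ)^2 + (n:ℝ)) * (M:ℝ) := by
        push_cast
        field_simp
      rw [hcast, harg]
    rw [tsum_congr hstep, tsum_mul_left, keyPoisson hM0 φ ((r.val : ℝ)/(M:ℝ)^2),
      ← tsum_mul_left, ← tsum_mul_left]
  rw [tsum_fintype]
  rw [Finset.sum_congr rfl (fun r _ => hinner r)]
  have hchar : ∀ (r : ZMod (M^2)) (n : ℤ),
      Complex.exp (-(2 * ↑π * Complex.I * n * ((((r.val : ℝ)/(M:ℝ)^2) : ℝ) : ℂ)))
        = ZMod.stdAddChar (-(r * ((n : ℤ) : ZMod (M^2)))) := by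
    intro r n
    have h1 : (-(r * ((n : ℤ) : ZMod (M^2))) : ZMod (M^2))
        = (((-((r.val : ℤ) * n) : ℤ)) : ZMod (M^2)) := by
      push_cast
      simp [ZMod.natCast_rightInverse r]
    rw [h1, ZMod.stdAddChar_coe]
    congr 1
    push_cast
    field_simp
  have hsummand : ∀ (r : ZMod (M^2)), ∀ n : ℤ,
      c₀ r * ((M:ℂ)⁻¹ * (φ ((n:ℝ)/M)
          * Complex.exp (-(2 * ↑π * Complex.I * n * ((((r.val : ℝ)/(M:ℝ)^2) : ℝ) : ℂ)))))
      = (M:ℂ)⁻¹ * ((ZMod.stdAddChar (-(r * ((n : ℤ) : ZMod (M^2)))) * c₀ r)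
          * φ ((n:ℝ)/M)) := by
    intro r n
    rw [hchar r n]
    ring
  rw [Finset.sum_congr rfl (fun r _ => tsum_congr (hsummand r))]
  have hsumm : ∀ r : ZMod (M^2), Summable (fun n : ℤ =>
      (M:ℂ)⁻¹ * ((ZMod.stdAddChar (-(r * ((n : ℤ) : ZMod (M^2)))) * c₀ r)
        * φ ((n:ℝ)/M))) := by
    intro r
    apply Summable.of_norm_bounded
      (g := fun n : ℤ => (‖(M:ℂ)⁻¹‖ * ‖c₀ r‖) * ‖φ ((n:ℝ)/M)‖)
      ((schwartzSummable φ hMr1).mul_left _)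
    intro n
    rw [norm_mul, norm_mul, norm_mul]
    have h2 : ‖(ZMod.stdAddChar (-(r * ((n : ℤ) : ZMod (M^2)))) : ℂ)‖ = 1 := by
      rw [ZMod.stdAddChar_apply, Circle.norm_coe]
    rw [h2, one_mul]
    ring_nf
    exact le_refl _
  rw [← Summable.tsum_finsetSum (fun r _ => hsumm r)]
  apply tsum_congr
  intro n
  rw [ZMod.dft_apply]
  rw [Finset.mul_sum, Finset.sum_mul]
  apply Finset.sum_congr rfl
  intro r _
  rw [smul_eq_mul]
  ring


/-- **Lemma (Meyer; Kolountzakis).** Let `α ∈ (0, 1/6)`. For every integer `M > M_α`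
there exists a nonzero `M`-periodic complex measure `σ = Σ_λ c λ · δ_λ` with discrete
support which is a tempered distribution whose Fourier transform is again a measure
`Σ_λ ĉ λ · δ_λ` with discrete support, and
`supp σ ∪ supp σ̂ ⊆ M⁻¹ℤ \ [-αM, αM]`. -/
theorem exists_meyer_measure (α : ℝ) (hα : α ∈ Set.Ioo (0 : ℝ) (1 / 6)) :
    ∃ Mα : ℕ, ∀ M : ℕ, Mα < M →
      ∃ (c : ℝ → ℂ) (T : TemperedDistribution1D) (chat : ℝ → ℂ),
        c ≠ 0 ∧
        IsDiscreteSet (Function.support c) ∧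
        (∀ x : ℝ, c (x + M) = c x) ∧
        Represents T c ∧
        IsDiscreteSet (Function.support chat) ∧
        Represents (fourierTD T) chat ∧
        Function.support c ∪ Function.support chat ⊆
          {x : ℝ | ∃ k : ℤ, x = (k : ℝ) / M} \ Set.Icc (-(α * M)) (α * M) := by
  obtain ⟨hα0, hα6⟩ := hα
  refine ⟨2, ?_⟩
  intro M hM2
  have hM : 3 ≤ M := hM2
  have hM0 : 0 < M := by omega
  haveI : NeZero (M^2) := ⟨by positivity⟩
  have hMr0 : (0:ℝ) < M := by exact_mod_cast hM0
  have hMr1 : (1:ℝ) ≤ M := by exact_mod_cast hM0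
  have hMr3 : (3:ℝ) ≤ M := by exact_mod_cast hM
  have hMne : (M:ℝ) ≠ 0 := hMr0.ne'
  set s : ℤ := ⌊α * (M:ℝ)^2⌋ with hs
  have hs0 : 0 ≤ s := Int.floor_nonneg.2 (by positivity)
  have hsle : (s:ℝ) ≤ α * (M:ℝ)^2 := Int.floor_le _
  set S : Finset (ZMod (M^2)) :=
    (Finset.Icc (-s) s).image (fun j : ℤ => (j : ZMod (M^2))) with hSdef
  have hcard : 2 * S.card < M^2 := by
    have h1 : S.card ≤ (Finset.Icc (-s) s).card := Finset.card_image_le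
    rw [Int.card_Icc] at h1
    have h4 : (S.card : ℤ) ≤ 2*s+1 := by
      calc (S.card : ℤ) ≤ ((s + 1 - -s).toNat : ℤ) := by exact_mod_cast h1
      _ = s + 1 - -s := Int.toNat_of_nonneg (by omega)
      _ = 2*s+1 := by ring
    have h4' : (S.card : ℝ) ≤ 2*(s:ℝ)+1 := by exact_mod_cast h4
    have hM9 : (9:ℝ) ≤ (M:ℝ)^2 := by nlinarith
    have hαM : α * (M:ℝ)^2 < (M:ℝ)^2/6 := by nlinarith
    have h5 : (2:ℝ) * (S.card:ℝ) < ((M:ℝ))^2 := by nlinarith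
    exact_mod_cast h5
  obtain ⟨c₀, hc0ne, hc0S, hdftS⟩ := exists_c0 (M^2) S hcard
  -- coefficient functions on ℤ
  have castval : ∀ j : ZMod (M^2), (((j.val : ℤ)) : ZMod (M^2)) = j := by
    intro j
    push_cast
    exact ZMod.natCast_rightInverse j
  -- the functional A
  set A : SchwartzMap ℝ ℂ → ℂ :=
    fun φ => ∑' k : ℤ, c₀ ((k : ℤ) : ZMod (M^2)) * φ ((k:ℝ)/M) with hA
  have hsummN : ∀ (b : ZMod (M^2) → ℂ) (φ : SchwartzMap ℝ ℂ),
      Summable (fun k : ℤ => ‖b ((k : ℤ) : ZMod (M^2)) * φ ((k:ℝ)/M)‖) := by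
    intro b φ
    apply Summable.of_nonneg_of_le (fun k => norm_nonneg _) ?_
      ((schwartzSummable φ hMr1).mul_left (∑ j : ZMod (M^2), ‖b j‖))
    intro k
    rw [norm_mul]
    gcongr
    exact Finset.single_le_sum (f := fun j => ‖b j‖) (fun i _ => norm_nonneg _)
      (Finset.mem_univ _)
  have hsummc : ∀ (b : ZMod (M^2) → ℂ) (φ : SchwartzMap ℝ ℂ),
      Summable (fun k : ℤ => b ((k : ℤ) : ZMod (M^2)) * φ ((k:ℝ)/M)) :=
    fun b φ => (hsummN b φ).of_norm
  have hadd : ∀ f g : SchwartzMap ℝ ℂ, A (f + g) = A f + A g := by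
    intro f g
    rw [hA]
    simp only
    calc ∑' k : ℤ, c₀ ((k : ℤ) : ZMod (M^2)) * (f + g) ((k:ℝ)/M)
        = ∑' k : ℤ, (c₀ ((k : ℤ) : ZMod (M^2)) * f ((k:ℝ)/M)
            + c₀ ((k : ℤ) : ZMod (M^2)) * g ((k:ℝ)/M)) := by
          apply tsum_congr
          intro k
          rw [SchwartzMap.add_apply]
          ring
    _ = _ := Summable.tsum_add (hsummc c₀ f) (hsummc c₀ g)
  have hsmul : ∀ (a : ℂ) (f : SchwartzMap ℝ ℂ), A (a • f) = (RingHom.id ℂ) a • A f := by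
    intro a f
    rw [hA]
    simp only [RingHom.id_apply, smul_eq_mul]
    calc ∑' k : ℤ, c₀ ((k : ℤ) : ZMod (M^2)) * (a • f) ((k:ℝ)/M)
        = ∑' k : ℤ, a * (c₀ ((k : ℤ) : ZMod (M^2)) * f ((k:ℝ)/M)) := by
          apply tsum_congr
          intro k
          rw [SchwartzMap.smul_apply, smul_eq_mul]
          ring
    _ = _ := tsum_mul_left
  have hboundT : ∃ (st : Finset (ℕ × ℕ)) (C : ℝ), 0 ≤ C ∧ ∀ f : SchwartzMap ℝ ℂ,
      ‖A f‖ ≤ C * (st.sup (schwartzSeminormFamily ℂ ℝ ℂ)) f := by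
    set B : ℝ := ∑ j : ZMod (M^2), ‖c₀ j‖ with hB
    have hB0 : 0 ≤ B := Finset.sum_nonneg (fun j _ => norm_nonneg _)
    set tb : ℝ := ∑' k : ℤ, ((1 + |(k:ℝ)|)^2)⁻¹ with htb
    have htb0 : 0 ≤ tb := tsum_nonneg (fun k => by positivity)
    refine ⟨Finset.Iic (2,0), B * (4 * (M:ℝ)^2) * tb,
      by positivity, ?_⟩
    intro f
    set Sf : ℝ := ((Finset.Iic ((2:ℕ),(0:ℕ))).sup (schwartzSeminormFamily ℂ ℝ ℂ)) f with hSf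
    have hSf0 : 0 ≤ Sf := apply_nonneg _ _
    calc ‖A f‖ ≤ ∑' k : ℤ, ‖c₀ ((k : ℤ) : ZMod (M^2)) * f ((k:ℝ)/M)‖ :=
          norm_tsum_le_tsum_norm (hsummN c₀ f)
    _ ≤ ∑' k : ℤ, (B * (4 * (M:ℝ)^2) * Sf) * ((1 + |(k:ℝ)|)^2)⁻¹ := by
        apply Summable.tsum_le_tsum ?_ (hsummN c₀ f) (sumBase.mul_left _)
        intro k
        rw [norm_mul]
        have h1 : ‖c₀ ((k : ℤ) : ZMod (M^2))‖ ≤ B :=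
          Finset.single_le_sum (f := fun j => ‖c₀ j‖) (fun i _ => norm_nonneg _)
            (Finset.mem_univ _)
        have h2 := schwartzBound f hMr1 k
        calc ‖c₀ ((k : ℤ) : ZMod (M^2))‖ * ‖f ((k:ℝ)/M)‖
            ≤ B * ((4 * (M:ℝ)^2 * ((1 + |(k:ℝ)|)^2)⁻¹) * Sf) := by
              apply mul_le_mul h1 h2 (norm_nonneg _) hB0
        _ = (B * (4 * (M:ℝ)^2) * Sf) * ((1 + |(k:ℝ)|)^2)⁻¹ := by ring
    _ = B * (4 * (M:ℝ)^2) * tb * Sf := by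
        rw [tsum_mul_left, htb]
        ring
  set T : TemperedDistribution1D :=
    SchwartzMap.mkCLMtoNormedSpace A hadd hsmul hboundT with hT
  have hTapp : ∀ φ : SchwartzMap ℝ ℂ, T φ = A φ := fun φ => rfl
  -- support lemma
  have hsupp : ∀ (g : ℤ → ℂ), (∀ k : ℤ, ((k : ℤ) : ZMod (M^2)) ∈ S → g k = 0) →
      Function.support (meyerFun M g) ⊆
        ({x : ℝ | ∃ k : ℤ, x = (k : ℝ) / M} \ Set.Icc (-(α * M)) (α * M)) := by
    intro g hg x hx
    obtain ⟨k, hk, hgk⟩ := meyerFun_ne_zero hM0 g hx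
    constructor
    · exact ⟨k, hk⟩
    · rintro ⟨h1, h2⟩
      apply hgk
      apply hg
      have hxk : (k:ℝ) = x * M := by
        rw [hk]; field_simp
      have hub : (k:ℝ) ≤ α * (M:ℝ)^2 := by
        rw [hxk]
        nlinarith
      have hlb : -(α * (M:ℝ)^2) ≤ (k:ℝ) := by
        rw [hxk]
        nlinarith
      have hk1 : k ≤ s := Int.le_floor.2 hub
      have hk2 : -s ≤ k := by
        rw [neg_le]
        exact Int.le_floor.2 (by push_cast; linarith)
      exact Finset.mem_image_of_mem _ (Finset.mem_Icc.2 ⟨hk2, hk1⟩)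
  refine ⟨meyerFun M (fun k : ℤ => c₀ ((k : ℤ) : ZMod (M^2))), T,
    meyerFun M (fun n : ℤ => (M:ℂ)⁻¹ * ZMod.dft c₀ ((n : ℤ) : ZMod (M^2))),
    ?_, ?_, ?_, ?_, ?_, ?_, ?_⟩
  · -- c ≠ 0
    intro h0
    obtain ⟨j, hj⟩ := Function.ne_iff.1 hc0ne
    apply hj
    have := congrFun h0 (((j.val : ℤ) : ℝ)/M)
    rw [meyerFun_apply_div hM0 _ (j.val : ℤ), castval j] at this
    simpa using this
  · exact meyerFun_discrete hM0 _
  · -- periodicity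
    intro x
    apply meyerFun_periodic hM0
    intro k
    congr 1
    have hM2' : ((M : ZMod (M^2)))^2 = 0 := by
      rw [← Nat.cast_pow]; exact ZMod.natCast_self _
    push_cast
    simp [hM2']
  · -- Represents T c
    intro φ _
    rw [hTapp]
    exact (meyerFun_tsum hM0 _ ⇑φ).symm
  · exact meyerFun_discrete hM0 _
  · -- Represents (fourierTD T) chat
    intro φ _
    have h1 : fourierTD T φ = A (fourierTransformCLM ℂ φ) := rfl
    rw [h1]
    calc A (fourierTransformCLM ℂ φ)
        = ∑' k : ℤ, c₀ ((k : ℤ) : ZMod (M^2)) * 𝓕 (⇑φ) ((k:ℝ)/M) := by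
          apply tsum_congr
          intro k
          rw [fourierTransformCLM_apply, SchwartzMap.fourier_coe]
    _ = ∑' n : ℤ, ((M:ℂ)⁻¹ * ZMod.dft c₀ ((n : ℤ) : ZMod (M^2))) * φ ((n:ℝ)/M) :=
          keyDFT hM c₀ φ
    _ = ∑' x : ℝ, meyerFun M (fun n : ℤ => (M:ℂ)⁻¹
            * ZMod.dft c₀ ((n : ℤ) : ZMod (M^2))) x * φ x :=
          (meyerFun_tsum hM0 _ ⇑φ).symm
  · -- support union
    apply Set.union_subset
    · exact hsupp _ (fun k hk => hc0S _ hk)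
    · exact hsupp _ (fun k hk => by rw [hdftS _ hk, mul_zero])

end
end
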